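/- Let (b,c,d) be a triad in the real Cayley–Dickson algebra 𝔸ₙ (all εᵢ = 1) and set a := (b·c)·d. Then the associators within each of the following three groups are simultaneously zero or simultaneously nonzero: Type 1 group {[b,a,c], [b,d,c], [a,b,d], [a,c,d]}; Type 2 group {[a,b,c], [b,c,d], [b,a,d], [a,d,c]}; Type 3 group {[a,c,b], [c,b,d], [a,d,b], [c,a,d]}. -/

import Mathlib

noncomputable section

/-- The real Cayley–Dickson algebra carrier: `CD 0 = ℝ`, `CD (n+1) = CD n × CD n`. -/
def CD : ℕ → Type
  | 0 => ℝ
  | n + 1 => CD n × CD n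

instance CD.instAddCommGroup : (n : ℕ) → AddCommGroup (CD n)
  | 0 => inferInstanceAs (AddCommGroup ℝ)
  | n + 1 =>
    letI := CD.instAddCommGroup n
    inferInstanceAs (AddCommGroup (CD n × CD n))

instance CD.instModule : (n : ℕ) → Module ℝ (CD n)
  | 0 => inferInstanceAs (Module ℝ ℝ)
  | n + 1 =>
    letI := CD.instModule n
    inferInstanceAs (Module ℝ (CD n × CD n))

/-- The unit of the Cayley–Dickson algebra. -/
def CD.one : (n : ℕ) → CD n
  | 0 => (1 : ℝ)
  | n + 1 => (CD.one n, 0)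

/-- Conjugation: `(a, b)* = (a*, -b)`, identity on `ℝ`. -/
def CD.conj : (n : ℕ) → CD n → CD n
  | 0, a => a
  | n + 1, x => (CD.conj n x.1, -x.2)

/-- Cayley–Dickson multiplication with sign vector `ε`:
`(a,b)·(c,d) = (a·c − ε (n+1) • (d*·b), d·a + b·c*)`. -/
def CD.mul (ε : ℕ → ℝ) : (n : ℕ) → CD n → CD n → CD n
  | 0, a, c => (show ℝ from a) * (show ℝ from c)
  | n + 1, x, y =>
    (CD.mul ε n x.1 y.1 - ε (n + 1) • CD.mul ε n (CD.conj n y.2) x.2,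
     CD.mul ε n y.2 x.1 + CD.mul ε n x.2 (CD.conj n y.1))

/-- The standard basis element `e α` of `CD n`, for `α ⊆ {1,…,n}`. -/
def CD.basis : (n : ℕ) → Finset ℕ → CD n
  | 0, _ => (1 : ℝ)
  | n + 1, α =>
    if n + 1 ∈ α then ((0 : CD n), CD.basis n (α.erase (n + 1)))
    else (CD.basis n α, (0 : CD n))

/-- `α` indexes a pure basis element of `CD n`. -/
def CD.IsPure (n : ℕ) (α : Finset ℕ) : Prop :=
  α.Nonempty ∧ α ⊆ Finset.Icc 1 n

/-- The associator `[x,y,z] = (x·y)·z − x·(y·z)`. -/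
def CD.assoc (ε : ℕ → ℝ) (n : ℕ) (x y z : CD n) : CD n :=
  CD.mul ε n (CD.mul ε n x y) z - CD.mul ε n x (CD.mul ε n y z)

/-- A triad: indices of three pairwise distinct pure basis elements `b, c, d`
with `d ≠ ±(b·c)` (all signs `εᵢ = 1`). -/
def CD.IsTriad (n : ℕ) (α β γ : Finset ℕ) : Prop :=
  CD.IsPure n α ∧ CD.IsPure n β ∧ CD.IsPure n γ ∧
  α ≠ β ∧ α ≠ γ ∧ β ≠ γ ∧
  CD.basis n γ ≠ CD.mul (fun _ => 1) n (CD.basis n α) (CD.basis n β) ∧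
  CD.basis n γ ≠ -CD.mul (fun _ => 1) n (CD.basis n α) (CD.basis n β)

/-- Multiplication with all signs `εᵢ = 1`. -/
abbrev CD.mul1 (n : ℕ) : CD n → CD n → CD n := CD.mul (fun _ => 1) n

/-- Associator with all signs `εᵢ = 1`. -/
abbrev CD.assoc1 (n : ℕ) : CD n → CD n → CD n → CD n := CD.assoc (fun _ => 1) n

/-!
Products of basis elements are signed basis elements, `e_α e_β = ± e_{α ∆ β}`, with the sign given
by a recursion along the doubling. Induction on `n` shows that these signs obey the laws of
`e_α e_α = -1`, anticommutativity and alternativity on pure basis elements. Hence every associator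
of basis elements is `c(x, y, z) • e_{x ∆ y ∆ z}` for a scalar `c(x, y, z)`, and `a = ± e_δ` with
`δ = α ∆ β ∆ γ`. For distinct pure `x, y, z, w` with `x ∆ y ∆ z ∆ w = ∅` the sign laws give
`c(y, z, w) = -c(x, y, z)` and `c(z, y, x) = -c(x, y, z)`. These two moves preserve the splitting
`{{x, z}, {y, w}}` of `{α, β, γ, δ}` and connect all ordered triples with the same splitting; the
three groups of the theorem are the three splittings.
-/

open scoped symmDiff

namespace Finset

variable {ι : Type*} [DecidableEq ι]

theorem empty_symmDiff (s : Finset ι) : ∅ ∆ s = s := bot_symmDiff s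

theorem symmDiff_empty (s : Finset ι) : s ∆ ∅ = s := symmDiff_bot s

theorem ne_of_symmDiff_eq_empty {a b c d : Finset ι} (h : a ∆ b ∆ c ∆ d = ∅) (hab : a ≠ b) :
    c ≠ d := by
  rintro rfl
  rw [symmDiff_symmDiff_cancel_right, symmDiff_eq_empty] at h
  exact hab h

theorem symmDiff_subset {s t u : Finset ι} (hs : s ⊆ u) (ht : t ⊆ u) : s ∆ t ⊆ u :=
  symmDiff_subset_union.trans (union_subset hs ht)

theorem erase_symmDiff (a : ι) (s t : Finset ι) : (s ∆ t).erase a = s.erase a ∆ t.erase a := by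
  ext i
  simp only [mem_erase, mem_symmDiff]
  tauto

theorem erase_subset_Icc {n : ℕ} {s : Finset ℕ} (h : s ⊆ Icc 1 (n + 1)) :
    s.erase (n + 1) ⊆ Icc 1 n :=
  subset_insert_iff.1 (by rwa [insert_Icc_right_eq_Icc_add_one (by omega)])

theorem subset_Icc_of_notMem {n : ℕ} {s : Finset ℕ} (h : s ⊆ Icc 1 (n + 1)) (hs : n + 1 ∉ s) :
    s ⊆ Icc 1 n :=
  (subset_insert_iff_of_notMem hs).1 (by rwa [insert_Icc_right_eq_Icc_add_one (by omega)])

end Finset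

namespace CD
open Finset

theorem ext_succ {n : ℕ} {x y : CD (n + 1)} (h₁ : x.1 = y.1) (h₂ : x.2 = y.2) : x = y :=
  Prod.ext h₁ h₂

@[simp] theorem fst_smul {n : ℕ} (r : ℝ) (x : CD (n + 1)) : (r • x).1 = r • x.1 := rfl
@[simp] theorem snd_smul {n : ℕ} (r : ℝ) (x : CD (n + 1)) : (r • x).2 = r • x.2 := rfl
@[simp] theorem fst_neg {n : ℕ} (x : CD (n + 1)) : (-x).1 = -x.1 := rfl
@[simp] theorem snd_neg {n : ℕ} (x : CD (n + 1)) : (-x).2 = -x.2 := rfl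
@[simp] theorem fst_zero {n : ℕ} : (0 : CD (n + 1)).1 = 0 := rfl
@[simp] theorem snd_zero {n : ℕ} : (0 : CD (n + 1)).2 = 0 := rfl

theorem conj_smul : ∀ n (r : ℝ) (x : CD n), conj n (r • x) = r • conj n x
  | 0, _, _ => rfl
  | n + 1, r, x => ext_succ (conj_smul n r x.1) (smul_neg r x.2).symm

@[simp] theorem conj_zero (n : ℕ) : conj n 0 = 0 := by
  simpa using conj_smul n 0 0

variable (ε : ℕ → ℝ)

@[simp] theorem fst_mul (n : ℕ) (x y : CD (n + 1)) :
    (mul ε (n + 1) x y).1 = mul ε n x.1 y.1 - ε (n + 1) • mul ε n (conj n y.2) x.2 := rfl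

@[simp] theorem snd_mul (n : ℕ) (x y : CD (n + 1)) :
    (mul ε (n + 1) x y).2 = mul ε n y.2 x.1 + mul ε n x.2 (conj n y.1) := rfl

@[simp] theorem fst_conj (n : ℕ) (x : CD (n + 1)) : (conj (n + 1) x).1 = conj n x.1 := rfl
@[simp] theorem snd_conj (n : ℕ) (x : CD (n + 1)) : (conj (n + 1) x).2 = -x.2 := rfl

mutual

theorem mul_smul_left : ∀ n (r : ℝ) (x y : CD n), mul ε n (r • x) y = r • mul ε n x y
  | 0, r, x, y => mul_assoc r (show ℝ from x) (show ℝ from y)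
  | n + 1, r, x, y => by
    apply ext_succ <;>
      simp only [fst_mul, snd_mul, fst_smul, snd_smul, mul_smul_left n, mul_smul_right n,
        smul_sub, smul_add, smul_comm r]

theorem mul_smul_right : ∀ n (r : ℝ) (x y : CD n), mul ε n x (r • y) = r • mul ε n x y
  | 0, r, x, y => mul_left_comm (show ℝ from x) r (show ℝ from y)
  | n + 1, r, x, y => by
    apply ext_succ <;>
      simp only [fst_mul, snd_mul, fst_smul, snd_smul, conj_smul, mul_smul_left n,
        mul_smul_right n, smul_sub, smul_add, smul_comm r]

end

@[simp] theorem mul_zero_left (n : ℕ) (x : CD n) : mul ε n 0 x = 0 := by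
  simpa using mul_smul_left ε n 0 0 x

@[simp] theorem mul_zero_right (n : ℕ) (x : CD n) : mul ε n x 0 = 0 := by
  simpa using mul_smul_right ε n 0 x 0

theorem assoc_smul_left (n : ℕ) (r : ℝ) (x y z : CD n) :
    assoc ε n (r • x) y z = r • assoc ε n x y z := by
  rw [assoc, assoc, mul_smul_left, mul_smul_left, mul_smul_left, smul_sub]

theorem assoc_smul_middle (n : ℕ) (r : ℝ) (x y z : CD n) :
    assoc ε n x (r • y) z = r • assoc ε n x y z := by
  rw [assoc, assoc, mul_smul_right, mul_smul_left, mul_smul_left, mul_smul_right, smul_sub]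

theorem basis_succ (n : ℕ) (α : Finset ℕ) :
    basis (n + 1) α = if n + 1 ∈ α then ((0 : CD n), basis n (α.erase (n + 1)))
      else (basis n α, (0 : CD n)) := rfl

theorem fst_basis (n : ℕ) (α : Finset ℕ) :
    (basis (n + 1) α).1 = if n + 1 ∈ α then 0 else basis n α := by
  rw [basis_succ]; split_ifs <;> rfl

theorem snd_basis (n : ℕ) (α : Finset ℕ) :
    (basis (n + 1) α).2 = if n + 1 ∈ α then basis n (α.erase (n + 1)) else 0 := by
  rw [basis_succ]; split_ifs <;> rfl

theorem basis_ne_zero : ∀ n (α : Finset ℕ), basis n α ≠ 0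
  | 0, _ => one_ne_zero (α := ℝ)
  | n + 1, α => fun h => by
    by_cases hα : n + 1 ∈ α
    · exact basis_ne_zero n _ (by simpa [snd_basis, hα] using congrArg Prod.snd h)
    · exact basis_ne_zero n _ (by simpa [fst_basis, hα] using congrArg Prod.fst h)

def conjSign (α : Finset ℕ) : ℝ := if α = ∅ then 1 else -1

theorem conjSign_mul_self (α : Finset ℕ) : conjSign α * conjSign α = 1 := by
  unfold conjSign; split_ifs <;> norm_num

theorem conjSign_empty : conjSign ∅ = 1 := if_pos rfl

theorem conjSign_of_ne_empty {α : Finset ℕ} (h : α ≠ ∅) : conjSign α = -1 := if_neg h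

theorem conj_basis : ∀ n {α : Finset ℕ}, α ⊆ Icc 1 n →
    conj n (basis n α) = conjSign α • basis n α
  | 0, α, h => by
    obtain rfl : α = ∅ := by simpa using h
    exact (one_smul ℝ _).symm
  | n + 1, α, h => by
    by_cases hα : n + 1 ∈ α
    · have hne : α ≠ ∅ := ne_empty_of_mem hα
      apply ext_succ <;> simp [fst_basis, snd_basis, hα, conjSign_of_ne_empty hne]
    · apply ext_succ <;>
        simp [fst_basis, snd_basis, hα, conj_basis n (subset_Icc_of_notMem h hα)]

/-- The sign in `e_α e_β = ± e_{α ∆ β}`: the four branches are the four cases of the doubling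
formula in which one coordinate of each factor vanishes. -/
def mulSign : ℕ → Finset ℕ → Finset ℕ → ℝ
  | 0, _, _ => 1
  | n + 1, α, β =>
    if n + 1 ∈ α then
      if n + 1 ∈ β then
        -(conjSign (β.erase (n + 1)) * mulSign n (β.erase (n + 1)) (α.erase (n + 1)))
      else conjSign β * mulSign n (α.erase (n + 1)) β
    else
      if n + 1 ∈ β then mulSign n (β.erase (n + 1)) α
      else mulSign n α β

section succ

variable {n : ℕ} {α β : Finset ℕ}

theorem mulSign_succ_of_mem_of_mem (hα : n + 1 ∈ α) (hβ : n + 1 ∈ β) :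
    mulSign (n + 1) α β =
      -(conjSign (β.erase (n + 1)) * mulSign n (β.erase (n + 1)) (α.erase (n + 1))) := by
  rw [mulSign, if_pos hα, if_pos hβ]

theorem mulSign_succ_of_mem_of_notMem (hα : n + 1 ∈ α) (hβ : n + 1 ∉ β) :
    mulSign (n + 1) α β = conjSign β * mulSign n (α.erase (n + 1)) β := by
  rw [mulSign, if_pos hα, if_neg hβ]

theorem mulSign_succ_of_notMem_of_mem (hα : n + 1 ∉ α) (hβ : n + 1 ∈ β) :
    mulSign (n + 1) α β = mulSign n (β.erase (n + 1)) α := by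
  rw [mulSign, if_neg hα, if_pos hβ]

theorem mulSign_succ_of_notMem_of_notMem (hα : n + 1 ∉ α) (hβ : n + 1 ∉ β) :
    mulSign (n + 1) α β = mulSign n α β := by
  rw [mulSign, if_neg hα, if_neg hβ]

end succ

theorem basis_mul : ∀ n {α β : Finset ℕ}, α ⊆ Icc 1 n → β ⊆ Icc 1 n →
    mul1 n (basis n α) (basis n β) = mulSign n α β • basis n (α ∆ β)
  | 0, _, _, _, _ => rfl
  | n + 1, α, β, hα, hβ => by
    have hα' := erase_subset_Icc hα
    have hβ' := erase_subset_Icc hβ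
    by_cases hA : n + 1 ∈ α <;> by_cases hB : n + 1 ∈ β
    · have hAB : n + 1 ∉ α ∆ β := by simp [mem_symmDiff, hA, hB]
      rw [mulSign_succ_of_mem_of_mem hA hB]
      apply ext_succ <;> simp [fst_basis, snd_basis, hA, hB, hAB, conj_basis n hβ',
        mul_smul_left, basis_mul n hβ' hα', ← erase_symmDiff, symmDiff_comm β α, smul_smul]
    · have hAB : n + 1 ∈ α ∆ β := by simp [mem_symmDiff, hA, hB]
      have hβ'' := subset_Icc_of_notMem hβ hB
      rw [mulSign_succ_of_mem_of_notMem hA hB]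
      apply ext_succ <;> simp [fst_basis, snd_basis, hA, hB, hAB, conj_basis n hβ'',
        mul_smul_right, basis_mul n hα' hβ'', erase_symmDiff, smul_smul]
    · have hAB : n + 1 ∈ α ∆ β := by simp [mem_symmDiff, hA, hB]
      rw [mulSign_succ_of_notMem_of_mem hA hB]
      apply ext_succ <;> simp [fst_basis, snd_basis, hA, hB, hAB,
        basis_mul n hβ' (subset_Icc_of_notMem hα hA), erase_symmDiff, symmDiff_comm]
    · have hAB : n + 1 ∉ α ∆ β := by simp [mem_symmDiff, hA, hB]
      rw [mulSign_succ_of_notMem_of_notMem hA hB]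
      apply ext_succ <;> simp [fst_basis, snd_basis, hA, hB, hAB,
        basis_mul n (subset_Icc_of_notMem hα hA) (subset_Icc_of_notMem hβ hB)]

theorem mulSign_mul_self : ∀ n (α β : Finset ℕ), mulSign n α β * mulSign n α β = 1
  | 0, _, _ => one_mul 1
  | n + 1, α, β => by
    by_cases hA : n + 1 ∈ α <;> by_cases hB : n + 1 ∈ β
    · rw [mulSign_succ_of_mem_of_mem hA hB, neg_mul_neg, mul_mul_mul_comm, conjSign_mul_self,
        mulSign_mul_self, one_mul]
    · rw [mulSign_succ_of_mem_of_notMem hA hB, mul_mul_mul_comm, conjSign_mul_self,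
        mulSign_mul_self, one_mul]
    · rw [mulSign_succ_of_notMem_of_mem hA hB, mulSign_mul_self]
    · rw [mulSign_succ_of_notMem_of_notMem hA hB, mulSign_mul_self]

theorem mulSign_empty_right : ∀ n (α : Finset ℕ), mulSign n α ∅ = 1
  | 0, _ => rfl
  | n + 1, α => by
    by_cases hA : n + 1 ∈ α
    · rw [mulSign_succ_of_mem_of_notMem hA (notMem_empty _), mulSign_empty_right, conjSign_empty,
        one_mul]
    · rw [mulSign_succ_of_notMem_of_notMem hA (notMem_empty _), mulSign_empty_right]

theorem mulSign_empty_left : ∀ n (β : Finset ℕ), mulSign n ∅ β = 1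
  | 0, _ => rfl
  | n + 1, β => by
    by_cases hB : n + 1 ∈ β
    · rw [mulSign_succ_of_notMem_of_mem (notMem_empty _) hB, mulSign_empty_right]
    · rw [mulSign_succ_of_notMem_of_notMem (notMem_empty _) hB, mulSign_empty_left]

theorem mulSign_eq_one_or_eq_neg_one (n : ℕ) (α β : Finset ℕ) :
    mulSign n α β = 1 ∨ mulSign n α β = -1 :=
  mul_self_eq_one_iff.1 (mulSign_mul_self n α β)

theorem mulSign_ne_zero (n : ℕ) (α β : Finset ℕ) : mulSign n α β ≠ 0 :=
  left_ne_zero_of_mul_eq_one (mulSign_mul_self n α β)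

/-- Sign form of `e_α e_α = ±1` (with `+1` only for `e_∅ = 1`), of `e_β e_α = -e_α e_β` and of
`e_α (e_α e_β) = (e_α e_α) e_β`, for pure `e_α` and `e_β`. -/
structure SignLaws (n : ℕ) : Prop where
  self : ∀ {α}, α ⊆ Icc 1 n → mulSign n α α = conjSign α
  anticomm : ∀ {α β}, α ⊆ Icc 1 n → β ⊆ Icc 1 n → α ≠ ∅ → β ≠ ∅ → α ≠ β →
    mulSign n β α = -mulSign n α β
  left_alt : ∀ {α β}, α ⊆ Icc 1 n → β ⊆ Icc 1 n → α ≠ ∅ →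
    mulSign n α (α ∆ β) = -mulSign n α β

namespace SignLaws

variable {n : ℕ} {α β : Finset ℕ}

theorem right_alt (L : SignLaws n) (hα : α ⊆ Icc 1 n) (hβ : β ⊆ Icc 1 n) (hβ₀ : β ≠ ∅) :
    mulSign n (α ∆ β) β = -mulSign n α β := by
  by_cases hα₀ : α = ∅
  · rw [hα₀, empty_symmDiff, L.self hβ, conjSign_of_ne_empty hβ₀, mulSign_empty_left]
  by_cases hαβ : α = β
  · rw [hαβ, symmDiff_eq_empty.2 rfl, mulSign_empty_left, L.self hβ, conjSign_of_ne_empty hβ₀,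
      neg_neg]
  calc mulSign n (α ∆ β) β = -mulSign n β (β ∆ α) := by
        rw [symmDiff_comm, L.anticomm hβ (symmDiff_subset hβ hα) hβ₀
          (symmDiff_eq_empty.not.2 (Ne.symm hαβ)) fun h => hα₀ (symmDiff_eq_left.1 h.symm)]
    _ = -mulSign n α β := by rw [L.left_alt hβ hα hβ₀, neg_neg, L.anticomm hα hβ hα₀ hβ₀ hαβ]

theorem conjSign_mul_mulSign_self_symmDiff (L : SignLaws n) (hα : α ⊆ Icc 1 n) (hβ : β ⊆ Icc 1 n) :
    conjSign (α ∆ β) * mulSign n α (α ∆ β) = conjSign β * mulSign n β α := by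
  by_cases hα₀ : α = ∅
  · rw [hα₀, empty_symmDiff, mulSign_empty_left, mulSign_empty_right]
  by_cases hβ₀ : β = ∅
  · rw [hβ₀, symmDiff_empty, L.self hα, conjSign_mul_self, conjSign_empty, mulSign_empty_left,
      mul_one]
  by_cases hαβ : α = β
  · rw [hαβ, symmDiff_eq_empty.2 rfl, conjSign_empty, mulSign_empty_right, L.self hβ,
      conjSign_mul_self, mul_one]
  rw [conjSign_of_ne_empty (symmDiff_eq_empty.not.2 hαβ), conjSign_of_ne_empty hβ₀,
    L.left_alt hα hβ hα₀, L.anticomm hα hβ hα₀ hβ₀ hαβ]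

theorem conjSign_mul_mulSign_symmDiff_self (L : SignLaws n) (hα : α ⊆ Icc 1 n) (hβ : β ⊆ Icc 1 n) :
    conjSign (α ∆ β) * mulSign n (α ∆ β) α = conjSign β * mulSign n α β := by
  by_cases hα₀ : α = ∅
  · rw [hα₀, empty_symmDiff, mulSign_empty_left, mulSign_empty_right]
  by_cases hβ₀ : β = ∅
  · rw [hβ₀, symmDiff_empty, L.self hα, conjSign_mul_self, conjSign_empty, mulSign_empty_right,
      mul_one]
  by_cases hαβ : α = β
  · rw [hαβ, symmDiff_eq_empty.2 rfl, conjSign_empty, mulSign_empty_left, L.self hβ,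
      conjSign_mul_self, mul_one]
  have hαβ₀ : α ∆ β ≠ ∅ := symmDiff_eq_empty.not.2 hαβ
  rw [conjSign_of_ne_empty hαβ₀, conjSign_of_ne_empty hβ₀,
    L.anticomm hα (symmDiff_subset hα hβ) hα₀ hαβ₀ fun h => hβ₀ (symmDiff_eq_left.1 h.symm),
    L.left_alt hα hβ hα₀, neg_neg]

theorem self_succ (L : SignLaws n) (hα : α ⊆ Icc 1 (n + 1)) : mulSign (n + 1) α α = conjSign α := by
  by_cases hA : n + 1 ∈ α
  · rw [mulSign_succ_of_mem_of_mem hA hA, L.self (erase_subset_Icc hα), conjSign_mul_self,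
      conjSign_of_ne_empty (ne_empty_of_mem hA)]
  · rw [mulSign_succ_of_notMem_of_notMem hA hA, L.self (subset_Icc_of_notMem hα hA)]

theorem anticomm_succ (L : SignLaws n) (hα : α ⊆ Icc 1 (n + 1)) (hβ : β ⊆ Icc 1 (n + 1))
    (hα₀ : α ≠ ∅) (hβ₀ : β ≠ ∅) (hαβ : α ≠ β) : mulSign (n + 1) β α = -mulSign (n + 1) α β := by
  by_cases hA : n + 1 ∈ α <;> by_cases hB : n + 1 ∈ β
  · have hαβ' : α.erase (n + 1) ≠ β.erase (n + 1) := fun h => hαβ (erase_injOn' _ hA hB h)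
    rw [mulSign_succ_of_mem_of_mem hB hA, mulSign_succ_of_mem_of_mem hA hB, neg_neg]
    by_cases hα₀' : α.erase (n + 1) = ∅
    · rw [hα₀', conjSign_empty, conjSign_of_ne_empty (hα₀' ▸ hαβ').symm, mulSign_empty_left,
        mulSign_empty_right]
      norm_num
    by_cases hβ₀' : β.erase (n + 1) = ∅
    · rw [hβ₀', conjSign_empty, conjSign_of_ne_empty hα₀', mulSign_empty_left,
        mulSign_empty_right]
      norm_num
    rw [conjSign_of_ne_empty hα₀', conjSign_of_ne_empty hβ₀',
      L.anticomm (erase_subset_Icc hα) (erase_subset_Icc hβ) hα₀' hβ₀' hαβ']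
    ring
  · rw [mulSign_succ_of_notMem_of_mem hB hA, mulSign_succ_of_mem_of_notMem hA hB,
      conjSign_of_ne_empty hβ₀]
    ring
  · rw [mulSign_succ_of_mem_of_notMem hB hA, mulSign_succ_of_notMem_of_mem hA hB,
      conjSign_of_ne_empty hα₀]
    ring
  · rw [mulSign_succ_of_notMem_of_notMem hB hA, mulSign_succ_of_notMem_of_notMem hA hB,
      L.anticomm (subset_Icc_of_notMem hα hA) (subset_Icc_of_notMem hβ hB) hα₀ hβ₀ hαβ]

theorem left_alt_succ (L : SignLaws n) (hα : α ⊆ Icc 1 (n + 1)) (hβ : β ⊆ Icc 1 (n + 1))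
    (hα₀ : α ≠ ∅) :
    mulSign (n + 1) α (α ∆ β) = -mulSign (n + 1) α β := by
  by_cases hA : n + 1 ∈ α <;> by_cases hB : n + 1 ∈ β
  · have hAB : n + 1 ∉ α ∆ β := by simp [mem_symmDiff, hA, hB]
    rw [mulSign_succ_of_mem_of_notMem hA hAB, mulSign_succ_of_mem_of_mem hA hB, neg_neg,
      ← erase_eq_of_notMem hAB, erase_symmDiff,
      L.conjSign_mul_mulSign_self_symmDiff (erase_subset_Icc hα) (erase_subset_Icc hβ)]
  · have hAB : n + 1 ∈ α ∆ β := by simp [mem_symmDiff, hA, hB]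
    rw [mulSign_succ_of_mem_of_mem hA hAB, mulSign_succ_of_mem_of_notMem hA hB, erase_symmDiff,
      erase_eq_of_notMem hB, L.conjSign_mul_mulSign_symmDiff_self (erase_subset_Icc hα)
        (subset_Icc_of_notMem hβ hB)]
  · have hAB : n + 1 ∈ α ∆ β := by simp [mem_symmDiff, hA, hB]
    rw [mulSign_succ_of_notMem_of_mem hA hAB, mulSign_succ_of_notMem_of_mem hA hB, erase_symmDiff,
      erase_eq_of_notMem hA, symmDiff_comm,
      L.right_alt (erase_subset_Icc hβ) (subset_Icc_of_notMem hα hA) hα₀]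
  · have hAB : n + 1 ∉ α ∆ β := by simp [mem_symmDiff, hA, hB]
    rw [mulSign_succ_of_notMem_of_notMem hA hAB, mulSign_succ_of_notMem_of_notMem hA hB,
      L.left_alt (subset_Icc_of_notMem hα hA) (subset_Icc_of_notMem hβ hB) hα₀]

theorem succ (L : SignLaws n) : SignLaws (n + 1) :=
  ⟨L.self_succ, L.anticomm_succ, L.left_alt_succ⟩

end SignLaws

theorem signLaws : ∀ n, SignLaws n
  | 0 => by
    have h : ∀ {α : Finset ℕ}, α ⊆ Icc 1 0 → α = ∅ := fun h => by simpa using h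
    refine ⟨fun hα => by rw [h hα]; rfl, fun hα _ hα₀ => absurd (h hα) hα₀,
      fun hα _ hα₀ => absurd (h hα) hα₀⟩
  | n + 1 => (signLaws n).succ

theorem mulSign_symmDiff_right {n : ℕ} {α β : Finset ℕ} (hα : IsPure n α) (hβ : IsPure n β)
    (hαβ : α ≠ β) : mulSign n β (α ∆ β) = mulSign n α β := by
  have L := signLaws n
  rw [symmDiff_comm, L.left_alt hβ.2 hα.2 hβ.1.ne_empty,
    L.anticomm hα.2 hβ.2 hα.1.ne_empty hβ.1.ne_empty hαβ, neg_neg]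

def assocCoeff (n : ℕ) (x y z : Finset ℕ) : ℝ :=
  mulSign n x y * mulSign n (x ∆ y) z - mulSign n y z * mulSign n x (y ∆ z)

section assoc

variable {n : ℕ} {x y z w : Finset ℕ}

theorem assoc_basis (hx : x ⊆ Icc 1 n) (hy : y ⊆ Icc 1 n) (hz : z ⊆ Icc 1 n) :
    assoc1 n (basis n x) (basis n y) (basis n z) = assocCoeff n x y z • basis n (x ∆ y ∆ z) := by
  simp only [assoc, basis_mul n, mul_smul_left, mul_smul_right, hx, hy, hz, symmDiff_subset,
    smul_smul, symmDiff_assoc, ← sub_smul, assocCoeff]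

theorem assoc_basis_eq_zero_iff (hx : x ⊆ Icc 1 n) (hy : y ⊆ Icc 1 n) (hz : z ⊆ Icc 1 n) :
    assoc1 n (basis n x) (basis n y) (basis n z) = 0 ↔ assocCoeff n x y z = 0 := by
  rw [assoc_basis hx hy hz, smul_eq_zero, or_iff_left (basis_ne_zero n _)]

theorem assocCoeff_rotate (hx : IsPure n x) (hy : IsPure n y) (hz : IsPure n z) (hw : w.Nonempty)
    (hxy : x ≠ y) (hyz : y ≠ z) (h : x ∆ y ∆ z ∆ w = ∅) :
    assocCoeff n y z w = -assocCoeff n x y z := by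
  obtain rfl : x ∆ y ∆ z = w := symmDiff_eq_empty.1 h
  have hxy' : IsPure n (x ∆ y) :=
    ⟨nonempty_iff_ne_empty.2 (symmDiff_eq_empty.not.2 hxy), symmDiff_subset hx.2 hy.2⟩
  have hyz' : IsPure n (y ∆ z) :=
    ⟨nonempty_iff_ne_empty.2 (symmDiff_eq_empty.not.2 hyz), symmDiff_subset hy.2 hz.2⟩
  have hxyz : x ∆ y ≠ z := symmDiff_eq_empty.not.1 hw.ne_empty
  have hxyz' : x ≠ y ∆ z := symmDiff_eq_empty.not.1 (symmDiff_assoc x y z ▸ hw.ne_empty)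
  have h₁ := mulSign_symmDiff_right hx hy hxy
  have h₂ := mulSign_symmDiff_right hxy' hz hxyz
  have h₃ := mulSign_symmDiff_right hx hyz' hxyz'
  rw [← symmDiff_assoc] at h₃
  rw [assocCoeff, assocCoeff, symmDiff_comm z, symmDiff_symmDiff_cancel_right, h₁, h₂, h₃]
  ring

theorem assocCoeff_reverse (hx : IsPure n x) (hy : IsPure n y) (hz : IsPure n z) (hw : w.Nonempty)
    (hxy : x ≠ y) (hyz : y ≠ z) (h : x ∆ y ∆ z ∆ w = ∅) :
    assocCoeff n z y x = -assocCoeff n x y z := by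
  obtain rfl : x ∆ y ∆ z = w := symmDiff_eq_empty.1 h
  have L := signLaws n
  have hxy' : x ∆ y ≠ ∅ := symmDiff_eq_empty.not.2 hxy
  have hyz' : y ∆ z ≠ ∅ := symmDiff_eq_empty.not.2 hyz
  have hxyz : x ∆ y ≠ z := symmDiff_eq_empty.not.1 hw.ne_empty
  have hxyz' : x ≠ y ∆ z := symmDiff_eq_empty.not.1 (symmDiff_assoc x y z ▸ hw.ne_empty)
  rw [assocCoeff, assocCoeff, symmDiff_comm z, symmDiff_comm y x,
    L.anticomm hy.2 hz.2 hy.1.ne_empty hz.1.ne_empty hyz,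
    L.anticomm hx.2 hy.2 hx.1.ne_empty hy.1.ne_empty hxy,
    L.anticomm hx.2 (symmDiff_subset hy.2 hz.2) hx.1.ne_empty hyz' hxyz',
    L.anticomm (symmDiff_subset hx.2 hy.2) hz.2 hxy' hz.1.ne_empty hxyz]
  ring

theorem assocCoeff_swap_middle {p q r s : Finset ℕ} (hp : IsPure n p) (hq : IsPure n q)
    (hr : IsPure n r) (hs : IsPure n s) (hpq : p ≠ q) (hqr : q ≠ r) (h : p ∆ q ∆ r ∆ s = ∅) :
    assocCoeff n p s r = -assocCoeff n p q r := by
  have h' : q ∆ r ∆ s ∆ p = ∅ := by rw [← h]; ac_rfl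
  have hrs : r ≠ s := ne_of_symmDiff_eq_empty h hpq
  rw [assocCoeff_reverse hr hs hp hq.1 hrs (ne_of_symmDiff_eq_empty h' hqr) (by rw [← h]; ac_rfl),
    assocCoeff_rotate hq hr hs hp.1 hqr hrs h', assocCoeff_rotate hp hq hr hs.1 hpq hqr h, neg_neg]

end assoc

theorem IsTriad.symmDiff_ne {n : ℕ} {α β γ : Finset ℕ} (h : IsTriad n α β γ) : α ∆ β ≠ γ := by
  rintro rfl
  obtain ⟨hα, hβ, -, -, -, -, h₁, h₂⟩ := h
  simp only [basis_mul n hα.2 hβ.2] at h₁ h₂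
  rcases mulSign_eq_one_or_eq_neg_one n α β with hs | hs
  · exact h₁ (by rw [hs, one_smul])
  · exact h₂ (by rw [hs, neg_one_smul, neg_neg])

end CD

open CD Finset

/-- (Associativity theorem.) For a triad `(b,c,d)` with
`a := (b·c)·d`, within each of the three groups of associators the members are
simultaneously zero or simultaneously nonzero. -/
theorem stmt5 (n : ℕ) (α β γ : Finset ℕ) (h : CD.IsTriad n α β γ)
    (b c d a : CD n) (hb : b = CD.basis n α) (hc : c = CD.basis n β)
    (hd : d = CD.basis n γ) (ha : a = CD.mul1 n (CD.mul1 n b c) d) :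
    ((CD.assoc1 n b a c = 0 ↔ CD.assoc1 n b d c = 0) ∧
     (CD.assoc1 n b d c = 0 ↔ CD.assoc1 n a b d = 0) ∧
     (CD.assoc1 n a b d = 0 ↔ CD.assoc1 n a c d = 0)) ∧
    ((CD.assoc1 n a b c = 0 ↔ CD.assoc1 n b c d = 0) ∧
     (CD.assoc1 n b c d = 0 ↔ CD.assoc1 n b a d = 0) ∧
     (CD.assoc1 n b a d = 0 ↔ CD.assoc1 n a d c = 0)) ∧
    ((CD.assoc1 n a c b = 0 ↔ CD.assoc1 n c b d = 0) ∧
     (CD.assoc1 n c b d = 0 ↔ CD.assoc1 n a d b = 0) ∧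
     (CD.assoc1 n a d b = 0 ↔ CD.assoc1 n c a d = 0)) := by
  have hδ₀ := h.symmDiff_ne
  obtain ⟨hα, hβ, hγ, hαβ, hαγ, hβγ, -, -⟩ := h
  set δ := α ∆ β ∆ γ with hδ_def
  have hδ : IsPure n δ := ⟨nonempty_iff_ne_empty.2 (symmDiff_eq_empty.not.2 hδ₀),
    symmDiff_subset (symmDiff_subset hα.2 hβ.2) hγ.2⟩
  have hquad : α ∆ β ∆ γ ∆ δ = ∅ := symmDiff_eq_empty.2 rfl
  have hδα : δ ≠ α := by simpa [δ, symmDiff_assoc] using hβγ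
  have hδβ : δ ≠ β := by simpa [δ, symmDiff_right_comm α β γ] using hαγ
  have hδγ : δ ≠ γ := by simpa [δ] using hαβ
  have hr := mul_ne_zero (mulSign_ne_zero n α β) (mulSign_ne_zero n (α ∆ β) γ)
  have ha' : a = (mulSign n α β * mulSign n (α ∆ β) γ) • basis n δ := by
    simp only [ha, hb, hc, hd, basis_mul n, mul_smul_left, smul_smul, hα.2, hβ.2, hγ.2,
      symmDiff_subset, ← hδ_def]
  subst hb hc hd ha'
  simp only [assoc_smul_left, assoc_smul_middle, smul_eq_zero, hr, false_or,
    assoc_basis_eq_zero_iff, hα.2, hβ.2, hγ.2, hδ.2]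
  refine ⟨⟨?_, ?_, ?_⟩, ⟨?_, ?_, ?_⟩, ⟨?_, ?_, ?_⟩⟩
  · rw [assocCoeff_swap_middle hα hγ hβ hδ hαγ hβγ.symm (by rw [← hquad]; ac_rfl), neg_eq_zero]
  · rw [assocCoeff_rotate hδ hα hγ hβ.1 hδα hαγ (by rw [← hquad]; ac_rfl), neg_eq_zero]
  · rw [assocCoeff_swap_middle hδ hα hγ hβ hδα hαγ (by rw [← hquad]; ac_rfl), neg_eq_zero]
  · rw [assocCoeff_rotate hδ hα hβ hγ.1 hδα hαβ (by rw [← hquad]; ac_rfl), neg_eq_zero]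
  · rw [assocCoeff_swap_middle hα hβ hγ hδ hαβ hβγ hquad, neg_eq_zero]
  · rw [assocCoeff_rotate hα hδ hγ hβ.1 hδα.symm hδγ (by rw [← hquad]; ac_rfl), neg_eq_zero]
  · rw [assocCoeff_rotate hδ hβ hα hγ.1 hδβ hαβ.symm (by rw [← hquad]; ac_rfl), neg_eq_zero]
  · rw [assocCoeff_rotate hβ hδ hγ hα.1 hδβ.symm hδγ (by rw [← hquad]; ac_rfl),
      assocCoeff_swap_middle hβ hα hγ hδ hαβ.symm hαγ (by rw [← hquad]; ac_rfl), neg_neg]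
  · rw [assocCoeff_rotate hβ hδ hγ hα.1 hδβ.symm hδγ (by rw [← hquad]; ac_rfl), neg_eq_zero]
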